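/- arXiv:2106.09268 — 3 statements merged into one kernel-verified Lean document; each statement's English description precedes it below -/
import Mathlib

section
/- Let E be a complex inner product space and T : E → E a linear map that is symmetric, i.e. ⟪T u, v⟫ = ⟪u, T v⟫ for all u, v ∈ E. Let δ ≥ 0, C ≥ 0 and v ∈ E satisfy ‖T^s v‖ ≤ δ^s · C for every s ∈ ℕ. Then for every eigenvector w of T whose eigenvalue λ satisfies |λ| > δ, one has ⟪v, w⟫ = 0. -/
open scoped InnerProductSpace

/-! Pairing `v` with an eigenvector `w` of eigenvalue `λ` and moving `T ^ s` across the inner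
product gives `‖λ‖ ^ s * ‖⟪v, w⟫‖ ≤ ‖T ^ s v‖ * ‖w‖ ≤ δ ^ s * C * ‖w‖`; since `‖λ‖ > δ`, the
geometric factor `(δ / ‖λ‖) ^ s` forces `⟪v, w⟫ = 0`. -/

lemma Module.End.pow_apply_of_apply_eq_smul {R M : Type*} [CommSemiring R] [AddCommMonoid M]
    [Module R M] {f : Module.End R M} {μ : R} {w : M} (hw : f w = μ • w) (n : ℕ) :
    (f ^ n) w = μ ^ n • w := by
  induction n with
  | zero => simp
  | succ n ih => rw [pow_succ', Module.End.mul_apply, ih, map_smul, hw, smul_smul, pow_succ]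

lemma LinearMap.IsSymmetric.norm_pow_mul_norm_inner_le {𝕜 E : Type*} [RCLike 𝕜]
    [NormedAddCommGroup E] [InnerProductSpace 𝕜 E] {T : E →ₗ[𝕜] E} (hT : T.IsSymmetric)
    {μ : 𝕜} {w : E} (hw : T w = μ • w) (v : E) (n : ℕ) :
    ‖μ‖ ^ n * ‖⟪v, w⟫_𝕜‖ ≤ ‖(T ^ n) v‖ * ‖w‖ :=
  calc ‖μ‖ ^ n * ‖⟪v, w⟫_𝕜‖ = ‖⟪v, (T ^ n) w⟫_𝕜‖ := by
        rw [Module.End.pow_apply_of_apply_eq_smul hw, inner_smul_right, norm_mul, norm_pow]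
    _ = ‖⟪(T ^ n) v, w⟫_𝕜‖ := by rw [hT.pow n]
    _ ≤ ‖(T ^ n) v‖ * ‖w‖ := norm_inner_le_norm _ _

lemma nonpos_of_forall_pow_mul_le_pow_mul {a b x K : ℝ} (ha : 0 ≤ a) (hab : a < b)
    (h : ∀ n : ℕ, b ^ n * x ≤ a ^ n * K) : x ≤ 0 := by
  have hb : 0 < b := ha.trans_lt hab
  have hx : ∀ n : ℕ, x ≤ (a / b) ^ n * K := fun n => by
    rw [div_pow, div_mul_eq_mul_div, le_div_iff₀ (pow_pos hb n), mul_comm]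
    exact h n
  have hlim : Filter.Tendsto (fun n : ℕ => (a / b) ^ n * K) Filter.atTop (nhds 0) := by
    simpa using (tendsto_pow_atTop_nhds_zero_of_lt_one (div_nonneg ha hb.le)
      ((div_lt_one hb).mpr hab)).mul_const K
  exact ge_of_tendsto' hlim hx

theorem orthogonal_of_iterates_bound_general
    {E : Type*} [NormedAddCommGroup E] [InnerProductSpace ℂ E]
    (T : E →ₗ[ℂ] E) (hT : ∀ u v : E, ⟪T u, v⟫_ℂ = ⟪u, T v⟫_ℂ)
    (δ C : ℝ) (hδ : 0 ≤ δ)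
    (v : E) (hv : ∀ s : ℕ, ‖(T ^ s) v‖ ≤ δ ^ s * C)
    (w : E) (lam : ℂ) (hTw : T w = lam • w)
    (hlam : δ < ‖lam‖) :
    ⟪v, w⟫_ℂ = 0 := by
  have hbound : ∀ s : ℕ, ‖lam‖ ^ s * ‖⟪v, w⟫_ℂ‖ ≤ δ ^ s * (C * ‖w‖) := fun s =>
    calc ‖lam‖ ^ s * ‖⟪v, w⟫_ℂ‖ ≤ ‖(T ^ s) v‖ * ‖w‖ :=
          LinearMap.IsSymmetric.norm_pow_mul_norm_inner_le hT hTw v s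
      _ ≤ δ ^ s * C * ‖w‖ := mul_le_mul_of_nonneg_right (hv s) (norm_nonneg w)
      _ = δ ^ s * (C * ‖w‖) := mul_assoc _ _ _
  exact norm_le_zero_iff.mp (nonpos_of_forall_pow_mul_le_pow_mul hδ hlam hbound)

/-- Let `E` be a complex inner product space and `T : E → E` a linear map that is symmetric,
i.e. `⟪T u, v⟫ = ⟪u, T v⟫` for all `u, v`.  Let `δ ≥ 0`, `C ≥ 0` and `v ∈ E` satisfy
`‖T^s v‖ ≤ δ^s · C` for every `s ∈ ℕ`.  Then for every eigenvector `w` of `T` whose eigenvalue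
`λ` satisfies `|λ| > δ`, one has `⟪v, w⟫ = 0`. -/
theorem orthogonal_of_iterates_bound
    {E : Type*} [NormedAddCommGroup E] [InnerProductSpace ℂ E]
    (T : E →ₗ[ℂ] E) (hT : ∀ u v : E, ⟪T u, v⟫_ℂ = ⟪u, T v⟫_ℂ)
    (δ C : ℝ) (hδ : 0 ≤ δ) (hC : 0 ≤ C)
    (v : E) (hv : ∀ s : ℕ, ‖(T ^ s) v‖ ≤ δ ^ s * C)
    (w : E) (hw : w ≠ 0) (lam : ℂ) (hTw : T w = lam • w)
    (hlam : δ < ‖lam‖) :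
    ⟪v, w⟫_ℂ = 0 :=
  orthogonal_of_iterates_bound_general T hT δ C hδ v hv w lam hTw hlam
end

section
/- Let n ≥ 1 and let μ_1, …, μ_n be nonzero real numbers; let j_0 be the number of indices i with μ_i < 0. Fix j ∈ {0, 1, …, n}. Then the limit as t → +∞ of (∏_{i=1}^n μ_i/(1 − e^{−t μ_i})) · (∑_{J ⊆ {1,…,n}, |J| = j} e^{−t ∑_{l∈J} μ_l}) exists and equals ∏_{i=1}^n |μ_i| if j = j_0, and equals 0 if j ≠ j_0. -/
/-!
Distribute the prefactor over the sum over `J`. In the summand indexed by `J`, the factor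
`e^{-t μ_i}` for `i ∈ J` is absorbed into `μ_i / (1 - e^{-t μ_i})`, turning it into the same
expression at `-μ_i`. Since `a / (1 - e^{-t a}) → max a 0` as `t → ∞`, that summand tends to
`∏_i |μ_i|` if `J` is exactly the set of indices with `μ_i < 0`, and to `0` otherwise; this
`J` has cardinality `j₀`.
-/

open Filter Finset

lemma tendsto_div_one_sub_exp_neg_mul (a : ℝ) :
    Tendsto (fun t : ℝ => a / (1 - Real.exp (-t * a))) atTop (nhds (max a 0)) := by
  rcases lt_trichotomy a 0 with ha | rfl | ha
  · have hexp : Tendsto (fun t : ℝ => Real.exp (-t * a)) atTop atTop :=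
      Real.tendsto_exp_atTop.comp (tendsto_neg_atTop_atBot.atBot_mul_const_of_neg ha)
    rw [max_eq_right ha.le]
    exact tendsto_const_nhds.div_atBot (tendsto_atBot_add_const_left _ 1
      (tendsto_neg_atTop_atBot.comp hexp))
  · simp
  · have hexp : Tendsto (fun t : ℝ => Real.exp (-t * a)) atTop (nhds 0) :=
      Real.tendsto_exp_atBot.comp (tendsto_neg_atTop_atBot.atBot_mul_const ha)
    have hden : Tendsto (fun t : ℝ => 1 - Real.exp (-t * a)) atTop (nhds 1) := by
      simpa using tendsto_const_nhds.sub hexp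
    have hlim : Tendsto (fun t : ℝ => a / (1 - Real.exp (-t * a))) atTop (nhds (a / 1)) :=
      tendsto_const_nhds.div hden one_ne_zero
    rw [div_one] at hlim
    rwa [max_eq_left ha.le]

lemma div_one_sub_exp_neg_mul_mul_exp (a t : ℝ) :
    a / (1 - Real.exp (-t * a)) * Real.exp (-t * a) = -a / (1 - Real.exp (-t * -a)) := by
  have hx : Real.exp (t * a) ≠ 0 := (Real.exp_pos _).ne'
  rw [show -t * -a = t * a by ring, show -t * a = -(t * a) by ring, Real.exp_neg,
    ← div_eq_mul_inv, div_div, sub_mul, one_mul, inv_mul_cancel₀ hx, ← neg_div_neg_eq, neg_sub]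

section Fintype

variable {ι : Type*} [Fintype ι] [DecidableEq ι]

lemma prod_div_one_sub_exp_mul_exp_sum (μ : ι → ℝ) (J : Finset ι) (t : ℝ) :
    (∏ i, μ i / (1 - Real.exp (-t * μ i))) * Real.exp (-t * ∑ l ∈ J, μ l) =
      ∏ i, (fun a => a / (1 - Real.exp (-t * a))) (if i ∈ J then -μ i else μ i) := by
  calc _ = ∏ i, μ i / (1 - Real.exp (-t * μ i)) * (if i ∈ J then Real.exp (-t * μ i) else 1) := by
        rw [prod_mul_distrib, prod_ite_mem, univ_inter, ← Real.exp_sum, mul_sum]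
    _ = _ := prod_congr rfl fun i _ => by
        split_ifs
        · exact div_one_sub_exp_neg_mul_mul_exp _ _
        · exact mul_one _

lemma prod_max_ite_neg_eq (μ : ι → ℝ) (J : Finset ι) :
    ∏ i, max (if i ∈ J then -μ i else μ i) 0 =
      if J = univ.filter (fun i => μ i < 0) then ∏ i, |μ i| else 0 := by
  split_ifs with hJ
  · subst hJ
    refine prod_congr rfl fun i _ => ?_
    by_cases h : μ i < 0
    · simp [h, abs_of_neg h, h.le]
    · simp [h, abs_of_nonneg (not_lt.mp h), not_lt.mp h]
  · obtain ⟨i, hi⟩ : ∃ i, ¬(i ∈ J ↔ μ i < 0) := by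
      by_contra! h
      exact hJ (ext fun i => by simp [h])
    refine prod_eq_zero (mem_univ i) ?_
    by_cases h : i ∈ J
    · simp_all [le_of_not_gt]
    · simp_all [le_of_lt]

lemma tendsto_prod_div_one_sub_exp_mul_exp_sum (μ : ι → ℝ) (J : Finset ι) :
    Tendsto (fun t : ℝ => (∏ i, μ i / (1 - Real.exp (-t * μ i))) * Real.exp (-t * ∑ l ∈ J, μ l))
      atTop (nhds (if J = univ.filter (fun i => μ i < 0) then ∏ i, |μ i| else 0)) := by
  simp_rw [prod_div_one_sub_exp_mul_exp_sum, ← prod_max_ite_neg_eq]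
  exact tendsto_finsetProd _ fun i _ => tendsto_div_one_sub_exp_neg_mul _

end Fintype

theorem heat_integrand_limit_general
    (n : ℕ) (μ : Fin n → ℝ)
    (j : ℕ) :
    Tendsto
      (fun t : ℝ =>
        (∏ i, μ i / (1 - Real.exp (-t * μ i))) *
          ∑ J ∈ Finset.powersetCard j (Finset.univ : Finset (Fin n)),
            Real.exp (-t * ∑ l ∈ J, μ l))
      atTop
      (nhds (if j = (Finset.univ.filter fun i => μ i < 0).card then ∏ i, |μ i| else 0)) := by
  have h := tendsto_finsetSum (powersetCard j univ) fun J _ =>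
    tendsto_prod_div_one_sub_exp_mul_exp_sum μ J
  simpa only [sum_ite_eq', mem_powersetCard_univ, ← mul_sum, eq_comm (b := j)] using h

/-- Let `n ≥ 1` and let `μ_1, …, μ_n` be nonzero real numbers, `j₀` the number of indices `i`
with `μ_i < 0`, and `j ∈ {0, …, n}`.  Then, as `t → +∞`,
`(∏_i μ_i/(1 − e^{−t μ_i})) · (∑_{|J| = j} e^{−t ∑_{l∈J} μ_l})`
converges to `∏_i |μ_i|` if `j = j₀`, and to `0` otherwise. -/
theorem heat_integrand_limit
    (n : ℕ) (hn : 1 ≤ n) (μ : Fin n → ℝ) (hμ : ∀ i, μ i ≠ 0)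
    (j : ℕ) (hj : j ≤ n) :
    Tendsto
      (fun t : ℝ =>
        (∏ i, μ i / (1 - Real.exp (-t * μ i))) *
          ∑ J ∈ Finset.powersetCard j (Finset.univ : Finset (Fin n)),
            Real.exp (-t * ∑ l ∈ J, μ l))
      atTop
      (nhds (if j = (Finset.univ.filter fun i => μ i < 0).card then ∏ i, |μ i| else 0)) :=
  heat_integrand_limit_general n μ j
end

section
/- Let R and L be n×n complex Hermitian matrices and j ∈ {0, …, n}. Assume L satisfies condition Y(j). Then the set ℝ(j) = {η ∈ ℝ : the Hermitian matrix R − 2ηL has exactly j negative and n − j positive eigenvalues} is a bounded subset of ℝ. -/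
/-- Condition `Y(j)` for an `n×n` Hermitian matrix `L`: `L` has at least
`max (n+1−j) (j+1)` eigenvalues of the same sign (all positive or all negative, with
multiplicity), or at least `min (n+1−j) (j+1)` pairs of eigenvalues of opposite signs. -/
def CondY (n j : ℕ) {L : Matrix (Fin n) (Fin n) ℂ} (hL : L.IsHermitian) : Prop :=
  max (n + 1 - j) (j + 1) ≤
      max (Finset.univ.filter fun i => 0 < hL.eigenvalues i).card
        (Finset.univ.filter fun i => hL.eigenvalues i < 0).card ∨
    min (n + 1 - j) (j + 1) ≤
      min (Finset.univ.filter fun i => 0 < hL.eigenvalues i).card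
        (Finset.univ.filter fun i => hL.eigenvalues i < 0).card

/-!
For `|η|` large the form of `R - 2ηL` is dominated by that of `-2ηL` on the spans `P₊`, `P₋` of
the eigenvectors of `L` with positive, resp. negative, eigenvalues: if `|⟪x, R x⟫| ≤ C ‖x‖²` and
every nonzero eigenvalue of `L` has modulus at least `c > 0`, then for `2ηc > C` the form of
`R - 2ηL` is negative definite on `P₊` and positive definite on `P₋`, and the other way round for
`2ηc < -C`. A subspace on which a Hermitian form is negative definite meets the span of the
eigenvectors with nonnegative eigenvalues trivially, so its dimension is at most the number of
negative eigenvalues. Hence for such `η` the matrix `R - 2ηL` has at least `#pos(L)` negative and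
`#neg(L)` positive eigenvalues (or the reverse), and `Y(j)` forbids these counts to be `j` and
`n - j`.
-/

open Module RCLike Submodule Finset
open scoped InnerProductSpace

namespace OrthonormalBasis

variable {𝕜 E ι : Type*} [RCLike 𝕜] [NormedAddCommGroup E] [InnerProductSpace 𝕜 E] [Fintype ι]
  (b : OrthonormalBasis ι 𝕜 E) {T : E →ₗ[𝕜] E} {μ : ι → ℝ}

theorem re_inner_apply_eq_sum (hT : ∀ i, T (b i) = (μ i : 𝕜) • b i) (x : E) :
    re ⟪x, T x⟫_𝕜 = ∑ i, μ i * ‖⟪b i, x⟫_𝕜‖ ^ 2 := by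
  have hTx : T x = ∑ i, (⟪b i, x⟫_𝕜 * μ i) • b i := by
    conv_lhs => rw [← b.sum_repr' x]
    simp only [map_sum, map_smul, hT, smul_smul]
  simp only [hTx, inner_sum, inner_smul_right, map_sum, ← inner_conj_symm x (b _)]
  refine sum_congr rfl fun i _ => ?_
  rw [mul_comm, ← mul_assoc, RCLike.conj_mul, ← ofReal_pow, ← ofReal_mul, ofReal_re, mul_comm]

theorem inner_eq_zero_of_mem_span_image {s : Set ι} {x : E} (hx : x ∈ span 𝕜 (b '' s)) {i : ι}
    (hi : i ∉ s) : ⟪b i, x⟫_𝕜 = 0 := by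
  have : span 𝕜 (b '' s) ≤ (𝕜 ∙ b i)ᗮ := by
    refine span_le.2 ?_
    rintro _ ⟨k, hk, rfl⟩
    exact (mem_orthogonal_singleton_iff_inner_right).2
      (b.orthonormal.2 (ne_of_mem_of_not_mem hk hi).symm)
  exact (mem_orthogonal_singleton_iff_inner_right).1 (this hx)

theorem finrank_span_image (p : ι → Prop) [DecidablePred p] :
    finrank 𝕜 (span 𝕜 (b '' {i | p i})) = #{i | p i} := by
  rw [Set.image_eq_range]
  exact (finrank_span_eq_card (b.orthonormal.linearIndependent.comp _ Subtype.val_injective)).trans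
    (Fintype.card_subtype _)

theorem mul_norm_sq_le_re_inner_apply (hT : ∀ i, T (b i) = (μ i : 𝕜) • b i) {s : Set ι} {c : ℝ}
    (hc : ∀ i ∈ s, c ≤ μ i) {x : E} (hx : x ∈ span 𝕜 (b '' s)) :
    c * ‖x‖ ^ 2 ≤ re ⟪x, T x⟫_𝕜 := by
  rw [b.re_inner_apply_eq_sum hT, ← b.sum_sq_norm_inner_right, mul_sum]
  refine sum_le_sum fun i _ => ?_
  by_cases hi : i ∈ s
  · exact mul_le_mul_of_nonneg_right (hc i hi) (sq_nonneg _)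
  · simp [b.inner_eq_zero_of_mem_span_image hx hi]

theorem finrank_le_card_neg (hT : ∀ i, T (b i) = (μ i : 𝕜) • b i) (W : Submodule 𝕜 E)
    (hW : ∀ x ∈ W, x ≠ 0 → re ⟪x, T x⟫_𝕜 < 0) : finrank 𝕜 W ≤ #{i | μ i < 0} := by
  have := Module.Finite.of_basis b.toBasis
  set P := span 𝕜 (b '' {i | ¬ μ i < 0})
  have hP : ∀ x ∈ P, 0 ≤ re ⟪x, T x⟫_𝕜 := fun x hx => by
    simpa using b.mul_norm_sq_le_re_inner_apply hT (c := 0) (fun i hi => not_lt.1 hi) hx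
  have hdisj : Disjoint W P := disjoint_def.2 fun x hxW hxP => by
    by_contra hx
    exact (hW x hxW hx).not_ge (hP x hxP)
  have hdim := Submodule.finrank_add_finrank_le_of_disjoint hdisj
  rw [b.finrank_span_image, finrank_eq_card_basis b.toBasis] at hdim
  have := card_filter_add_card_filter_not (s := univ) (fun i => μ i < 0)
  rw [card_univ] at this
  omega

theorem finrank_le_card_pos (hT : ∀ i, T (b i) = (μ i : 𝕜) • b i) (W : Submodule 𝕜 E)
    (hW : ∀ x ∈ W, x ≠ 0 → 0 < re ⟪x, T x⟫_𝕜) : finrank 𝕜 W ≤ #{i | 0 < μ i} := by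
  simpa using b.finrank_le_card_neg (T := -T) (μ := -μ) (fun i => by simp [hT]) W
    (fun x hx hx0 => by simpa using hW x hx hx0)

end OrthonormalBasis

section Perturbation

variable {𝕜 E ι κ : Type*} [RCLike 𝕜] [NormedAddCommGroup E] [InnerProductSpace 𝕜 E]
  [Fintype ι] [Fintype κ] {R L : E →ₗ[𝕜] E} {bL : OrthonormalBasis ι 𝕜 E} {μL : ι → ℝ}
  {bM : OrthonormalBasis κ 𝕜 E} {μM : κ → ℝ} {t C c : ℝ}

theorem card_pos_le_card_neg_sub_smul (hL : ∀ i, L (bL i) = (μL i : 𝕜) • bL i)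
    (hM : ∀ k, (R - (t : 𝕜) • L) (bM k) = (μM k : 𝕜) • bM k)
    (hR : ∀ x, re ⟪x, R x⟫_𝕜 ≤ C * ‖x‖ ^ 2) (hc : ∀ i, 0 < μL i → c ≤ μL i)
    (ht : C < t * c) (ht0 : 0 ≤ t) : #{i | 0 < μL i} ≤ #{k | μM k < 0} := by
  rw [← bL.finrank_span_image]
  refine bM.finrank_le_card_neg hM _ fun x hx hx0 => ?_
  have hLx := bL.mul_norm_sq_le_re_inner_apply hL hc hx
  have hx2 : 0 < ‖x‖ ^ 2 := pow_pos (norm_pos_iff.2 hx0) 2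
  have hMx : re ⟪x, (R - (t : 𝕜) • L) x⟫_𝕜 = re ⟪x, R x⟫_𝕜 - t * re ⟪x, L x⟫_𝕜 := by
    simp [inner_sub_right, inner_smul_right]
  nlinarith [hR x]

theorem card_le_card_sub_smul_of_lt_mul (hL : ∀ i, L (bL i) = (μL i : 𝕜) • bL i)
    (hM : ∀ k, (R - (t : 𝕜) • L) (bM k) = (μM k : 𝕜) • bM k)
    (hR : ∀ x, |re ⟪x, R x⟫_𝕜| ≤ C * ‖x‖ ^ 2) (hC : 0 ≤ C) (hc0 : 0 < c)
    (hc : ∀ i, μL i ≠ 0 → c ≤ |μL i|) (ht : C < t * c) :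
    #{i | 0 < μL i} ≤ #{k | μM k < 0} ∧ #{i | μL i < 0} ≤ #{k | 0 < μM k} := by
  have ht0 : 0 ≤ t := by nlinarith
  constructor
  · refine card_pos_le_card_neg_sub_smul hL hM (fun x => (le_abs_self _).trans (hR x))
      (fun i hi => ?_) ht ht0
    simpa [abs_of_pos hi] using hc i hi.ne'
  · -- `-(R - tL) = -R - t(-L)` exchanges the signs of all eigenvalues
    have := card_pos_le_card_neg_sub_smul (R := -R) (L := -L) (bL := bL) (μL := -μL) (μM := -μM)
      (fun i => by simp [hL]) (fun k => by simpa [sub_eq_add_neg, add_comm] using congr(-$(hM k)))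
      (fun x => by simpa using (neg_le_abs _).trans (hR x)) (fun i hi => ?_) ht ht0
    · simpa using this
    · simpa [abs_of_neg (neg_pos.1 hi)] using hc i (by simpa using hi.ne')

theorem card_le_card_sub_smul_of_mul_lt_neg (hL : ∀ i, L (bL i) = (μL i : 𝕜) • bL i)
    (hM : ∀ k, (R - (t : 𝕜) • L) (bM k) = (μM k : 𝕜) • bM k)
    (hR : ∀ x, |re ⟪x, R x⟫_𝕜| ≤ C * ‖x‖ ^ 2) (hC : 0 ≤ C) (hc0 : 0 < c)
    (hc : ∀ i, μL i ≠ 0 → c ≤ |μL i|) (ht : t * c < -C) :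
    #{i | 0 < μL i} ≤ #{k | 0 < μM k} ∧ #{i | μL i < 0} ≤ #{k | μM k < 0} := by
  -- `R - tL = R - (-t)(-L)`
  have := card_le_card_sub_smul_of_lt_mul (L := -L) (bL := bL) (μL := -μL) (t := -t)
    (fun i => by simp [hL]) (fun k => by simpa using hM k) hR hC hc0
    (fun i hi => by simpa using hc i (by simpa using hi)) (by linarith)
  simp only [Pi.neg_apply, neg_pos, neg_lt_zero] at this
  exact this.symm

end Perturbation

theorem Matrix.IsHermitian.toEuclideanLin_eigenvectorBasis {𝕜 n : Type*} [RCLike 𝕜] [Fintype n]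
    [DecidableEq n] {A : Matrix n n 𝕜} (hA : A.IsHermitian) (i : n) :
    Matrix.toEuclideanLin A (hA.eigenvectorBasis i) =
      (hA.eigenvalues i : 𝕜) • hA.eigenvectorBasis i := by
  ext k
  have := congrFun (hA.mulVec_eigenvectorBasis i) k
  rw [Matrix.toLpLin_apply]
  simp only [PiLp.smul_apply]
  rw [this, Pi.smul_apply, RCLike.real_smul_eq_coe_smul (K := 𝕜)]

theorem LinearMap.exists_abs_re_inner_apply_le {𝕜 E : Type*} [RCLike 𝕜] [NormedAddCommGroup E]
    [InnerProductSpace 𝕜 E] [FiniteDimensional 𝕜 E] (T : E →ₗ[𝕜] E) :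
    ∃ C, 0 ≤ C ∧ ∀ x, |re ⟪x, T x⟫_𝕜| ≤ C * ‖x‖ ^ 2 := by
  refine ⟨‖T.toContinuousLinearMap‖, norm_nonneg _, fun x => ?_⟩
  calc |re ⟪x, T x⟫_𝕜| ≤ ‖x‖ * ‖T.toContinuousLinearMap x‖ :=
        (abs_re_le_norm _).trans (norm_inner_le_norm _ _)
    _ ≤ ‖x‖ * (‖T.toContinuousLinearMap‖ * ‖x‖) := by
        gcongr; exact ContinuousLinearMap.le_opNorm _ _
    _ = ‖T.toContinuousLinearMap‖ * ‖x‖ ^ 2 := by ring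

theorem exists_pos_le_abs_of_ne_zero {ι : Type*} [Finite ι] (μ : ι → ℝ) :
    ∃ c, 0 < c ∧ ∀ i, μ i ≠ 0 → c ≤ |μ i| := by
  have hμ : ∀ i, ∀ᶠ c in nhdsWithin (0 : ℝ) (Set.Ioi 0), μ i ≠ 0 → c ≤ |μ i| := fun i => by
    by_cases hi : μ i = 0
    · simp [hi]
    · exact (eventually_nhdsWithin_of_eventually_nhds (eventually_le_nhds (abs_pos.2 hi))).mono
        fun _ hc _ => hc
  obtain ⟨c, hc, hc0⟩ := ((Filter.eventually_all.2 hμ).and self_mem_nhdsWithin).exists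
  exact ⟨c, hc0, hc⟩

theorem CondY.not_card_le {n j : ℕ} {L : Matrix (Fin n) (Fin n) ℂ} {hL : L.IsHermitian}
    (hY : CondY n j hL) (hj : j ≤ n) :
    ¬ (#{i | 0 < hL.eigenvalues i} ≤ j ∧ #{i | hL.eigenvalues i < 0} ≤ n - j) ∧
      ¬ (#{i | 0 < hL.eigenvalues i} ≤ n - j ∧ #{i | hL.eigenvalues i < 0} ≤ j) := by
  unfold CondY at hY
  omega

theorem R_j_bounded_general
    (n : ℕ) (R L : Matrix (Fin n) (Fin n) ℂ)
    (hL : L.IsHermitian)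
    (j : ℕ) (hj : j ≤ n) (hY : CondY n j hL) :
    Bornology.IsBounded
      {η : ℝ | ∃ h : (R - (2 * η) • L).IsHermitian,
        (Finset.univ.filter fun i => h.eigenvalues i < 0).card = j ∧
        (Finset.univ.filter fun i => 0 < h.eigenvalues i).card = n - j} := by
  obtain ⟨C, hC0, hC⟩ := (Matrix.toEuclideanLin R).exists_abs_re_inner_apply_le
  obtain ⟨c, hc0, hc⟩ := exists_pos_le_abs_of_ne_zero hL.eigenvalues
  refine (Metric.isBounded_Icc (-(C / (2 * c))) (C / (2 * c))).subset ?_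
  rintro η ⟨hM, hneg, hpos⟩
  have hM' : ∀ k, (Matrix.toEuclideanLin R - ((2 * η : ℝ) : ℂ) • Matrix.toEuclideanLin L)
      (hM.eigenvectorBasis k) = (hM.eigenvalues k : ℂ) • hM.eigenvectorBasis k := by
    rw [← map_smul, Complex.coe_smul, ← map_sub]
    exact hM.toEuclideanLin_eigenvectorBasis
  have hL' := hL.toEuclideanLin_eigenvectorBasis
  constructor
  · by_contra! hη
    rw [lt_neg, div_lt_iff₀ (by positivity)] at hη
    obtain ⟨hp, hq⟩ := card_le_card_sub_smul_of_mul_lt_neg (t := 2 * η) (μM := hM.eigenvalues)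
      hL' hM' hC hC0 hc0 hc (by linarith)
    exact (hY.not_card_le hj).2 ⟨hpos ▸ hp, hneg ▸ hq⟩
  · by_contra! hη
    rw [div_lt_iff₀ (by positivity)] at hη
    obtain ⟨hp, hq⟩ := card_le_card_sub_smul_of_lt_mul (t := 2 * η) (μM := hM.eigenvalues)
      hL' hM' hC hC0 hc0 hc (by linarith)
    exact (hY.not_card_le hj).1 ⟨hneg ▸ hp, hpos ▸ hq⟩

/-- Let `R`, `L` be `n×n` complex Hermitian matrices and `j ∈ {0, …, n}`.  If `L` satisfies
condition `Y(j)`, then the set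
`ℝ(j) = {η ∈ ℝ : R − 2ηL has exactly j negative and n−j positive eigenvalues}`
is bounded. -/
theorem R_j_bounded
    (n : ℕ) (R L : Matrix (Fin n) (Fin n) ℂ)
    (hR : R.IsHermitian) (hL : L.IsHermitian)
    (j : ℕ) (hj : j ≤ n) (hY : CondY n j hL) :
    Bornology.IsBounded
      {η : ℝ | ∃ h : (R - (2 * η) • L).IsHermitian,
        (Finset.univ.filter fun i => h.eigenvalues i < 0).card = j ∧
        (Finset.univ.filter fun i => 0 < h.eigenvalues i).card = n - j} :=
  R_j_bounded_general n R L hL j hj hY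
end
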